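/- Let G = G₀(u) ⋄ H(u) be a connected k-uniform hypergraph (k even) where H is odd-bipartite, and let x be a first eigenvector of G (an H-eigenvector of Q(G) for its least H-eigenvalue). Then ∏_{v∈e} x_v ≤ 0 for every edge e ∈ E(H). -/

import Mathlib

open Finset

structure UHG (V : Type) [DecidableEq V] [Fintype V] (k : ℕ) where
  edges : Finset (Finset V)
  uniform : ∀ e ∈ edges, e.card = k

namespace UHG

variable {V : Type} [DecidableEq V] [Fintype V] {k : ℕ}

/-- The vertices of the hypergraph: all vertices covered by some edge. -/
def verts (G : UHG V k) : Finset V := G.edges.biUnion id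

/-- The set of edges containing a given vertex. -/
def incEdges (G : UHG V k) (v : V) : Finset (Finset V) :=
  G.edges.filter fun e => v ∈ e

/-- The degree of a vertex. -/
def deg (G : UHG V k) (v : V) : ℕ := (G.incEdges v).card

/-- Two vertices are adjacent if some edge contains both. -/
def Adj (G : UHG V k) (u v : V) : Prop := ∃ e ∈ G.edges, u ∈ e ∧ v ∈ e

/-- A hypergraph is connected if any two of its vertices are joined by a walk. -/
def Connected (G : UHG V k) : Prop :=
  G.verts.Nonempty ∧ ∀ u ∈ G.verts, ∀ v ∈ G.verts, Relation.ReflTransGen G.Adj u v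

/-- A hypergraph is odd-bipartite if there is a set `U` of vertices such that
every edge meets `U` in an odd number of vertices (the bipartition is `{U, V \ U}`). -/
def OddBipartite (G : UHG V k) : Prop :=
  ∃ U : Finset V, ∀ e ∈ G.edges, Odd (e ∩ U).card

/-- The signless Laplacian form `Q(G) x^k = ∑_{e ∈ E} (∑_{v∈e} x_v^k + k ∏_{v∈e} x_v)`. -/
def Qform (G : UHG V k) (x : V → ℝ) : ℝ :=
  ∑ e ∈ G.edges, ((∑ v ∈ e, x v ^ k) + (k : ℝ) * ∏ v ∈ e, x v)

/-- The H-eigenvector equation for the signless Laplacian tensor: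
`(λ - d(v)) x_v^{k-1} = ∑_{e ∋ v} ∏_{w ∈ e \ {v}} x_w` for every vertex `v`. -/
def eigenEq (G : UHG V k) (lam : ℝ) (x : V → ℝ) : Prop :=
  ∀ v : V, (lam - (G.deg v : ℝ)) * x v ^ (k - 1) =
    ∑ e ∈ G.incEdges v, ∏ w ∈ e.erase v, x w

/-- The least H-eigenvalue of the signless Laplacian tensor. -/
noncomputable def lamMin (G : UHG V k) : ℝ :=
  sInf {lam : ℝ | ∃ x : V → ℝ, x ≠ 0 ∧ G.eigenEq lam x}

/-- A first eigenvector: an H-eigenvector associated with the least H-eigenvalue. -/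
def IsFirstEigenvector (G : UHG V k) (x : V → ℝ) : Prop :=
  x ≠ 0 ∧ G.eigenEq G.lamMin x

/-- `G` is the coalescence `G₀(u) ⋄ H(u)`: its edges are the disjoint union of the
edges of `G₀` and `H`, which share only the vertex `u`. -/
def IsCoalescence (G G₀ H : UHG V k) (u : V) : Prop :=
  G.edges = G₀.edges ∪ H.edges ∧ Disjoint G₀.edges H.edges ∧
  G₀.verts ∩ H.verts ⊆ {u} ∧ u ∈ G₀.verts ∧ u ∈ H.verts

end UHG

/-!
A first eigenvector `x` minimises `Q(G) y^k` over the sphere `∑ y_v^k = ∑ x_v^k`. Indeed `Q`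
attains its minimum on this compact sphere, by Lagrange multipliers the minimiser is an
H-eigenvector whose eigenvalue `μ` satisfies `μ ∑ y_v^k ≤ Q(G) y^k` on the sphere, and
`Q(G) x^k = λ_min ∑ x_v^k` with `λ_min ≤ μ`.

If some edge of `H` had `∏ x_v > 0`, replace `x_v` on `V(H)` by `± |x_v|`, the sign being `-1` on
one class of the odd bipartition, up to a global sign that keeps `x_u` unchanged. The new vector
has the same sphere, agrees with `x` on `G₀`, and gives every edge of `H` the product
`-∏ |x_v|`, so its `Q`-value is strictly smaller: a contradiction.
-/

section PowerSums

variable {ι : Type*} [Fintype ι] {k : ℕ}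

theorem sum_pow_pos (hk : Even k) {z : ι → ℝ} (hz : z ≠ 0) : 0 < ∑ v, z v ^ k := by
  obtain ⟨v, hv⟩ := Function.ne_iff.mp hz
  exact Finset.sum_pos' (fun w _ => hk.pow_nonneg (z w)) ⟨v, Finset.mem_univ v, hk.pow_pos hv⟩

theorem neg_sum_pow_le_prod (hk : Even k) (hk0 : 0 < k) (z : ι → ℝ) {e : Finset ι}
    (he : e.card = k) : -∑ v, z v ^ k ≤ ∏ v ∈ e, z v := by
  obtain ⟨w, -, hw⟩ := e.exists_max_image (fun v => |z v|) (Finset.card_pos.mp (he ▸ hk0))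
  have hbound : |∏ v ∈ e, z v| ≤ ∑ v, z v ^ k :=
    calc |∏ v ∈ e, z v| = ∏ v ∈ e, |z v| := Finset.abs_prod _ _
      _ ≤ ∏ _v ∈ e, |z w| := Finset.prod_le_prod (fun _ _ => abs_nonneg _) hw
      _ = z w ^ k := by rw [Finset.prod_const, he, hk.pow_abs]
      _ ≤ ∑ v, z v ^ k :=
        Finset.single_le_sum (fun v _ => hk.pow_nonneg (z v)) (Finset.mem_univ w)
  exact (neg_le_neg hbound).trans (neg_abs_le _)

theorem isCompact_sum_pow_eq (hk : Even k) (hk0 : 0 < k) (T : ℝ) :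
    IsCompact {z : ι → ℝ | ∑ v, z v ^ k = T} := by
  refine (isCompact_closedBall (0 : ι → ℝ) (max 1 T)).of_isClosed_subset
    (isClosed_eq (by fun_prop) continuous_const) fun z hz => ?_
  rw [mem_closedBall_zero_iff, pi_norm_le_iff_of_nonneg (zero_le_one.trans (le_max_left 1 T))]
  intro v
  rw [Real.norm_eq_abs]
  by_contra! h
  have h1 : 1 ≤ |z v| := (le_max_left 1 T).trans h.le
  have hT : |z v| ≤ T :=
    calc |z v| ≤ |z v| ^ k := le_self_pow₀ h1 hk0.ne'
      _ = z v ^ k := hk.pow_abs _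
      _ ≤ T := hz ▸ Finset.single_le_sum (fun w _ => hk.pow_nonneg (z w)) (Finset.mem_univ v)
  linarith [le_max_right 1 T]

end PowerSums

section Signs

variable {ι : Type*} [DecidableEq ι]

theorem prod_ite_mem_neg_one {e U : Finset ι} (h : Odd (e ∩ U).card) :
    ∏ v ∈ e, (if v ∈ U then (-1 : ℝ) else 1) = -1 := by
  rw [Finset.prod_ite, Finset.prod_const, Finset.prod_const_one, mul_one,
    Finset.filter_mem_eq_inter, h.neg_one_pow]

end Signs

section Gradient

variable {ι : Type*} [Fintype ι] [DecidableEq ι]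

noncomputable def dotProductCLE : (ι → ℝ) ≃ₗ[ℝ] ((ι → ℝ) →L[ℝ] ℝ) :=
  (dotProductEquiv ℝ ι).trans LinearMap.toContinuousLinearMap

theorem dotProductCLE_apply (c h : ι → ℝ) : dotProductCLE c h = ∑ i, c i * h i := rfl

theorem hasStrictFDerivAt_sum_pow (k : ℕ) (a : ι → ℝ) :
    HasStrictFDerivAt (fun z : ι → ℝ => ∑ i, z i ^ k)
      (dotProductCLE fun i => k * a i ^ (k - 1)) a := by
  refine (HasStrictFDerivAt.fun_sum fun i _ =>
    (hasStrictFDerivAt_apply i a).pow k).congr_fderiv ?_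
  ext h
  simp [dotProductCLE_apply]

end Gradient

namespace UHG

variable {V : Type} [DecidableEq V] [Fintype V] {k : ℕ}

theorem mem_verts_of_mem {G : UHG V k} {e : Finset V} {v : V} (he : e ∈ G.edges) (hv : v ∈ e) :
    v ∈ G.verts :=
  Finset.mem_biUnion.mpr ⟨e, he, hv⟩

theorem sum_sum_incEdges (G : UHG V k) (F : V → Finset V → ℝ) :
    ∑ v, ∑ e ∈ G.incEdges v, F v e = ∑ e ∈ G.edges, ∑ v ∈ e, F v e := by
  simp only [incEdges, Finset.sum_filter]
  rw [Finset.sum_comm]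
  refine Finset.sum_congr rfl fun e _ => ?_
  rw [Finset.sum_ite_mem, Finset.univ_inter]

theorem sum_deg_mul (G : UHG V k) (f : V → ℝ) :
    ∑ v, (G.deg v : ℝ) * f v = ∑ e ∈ G.edges, ∑ v ∈ e, f v := by
  rw [← G.sum_sum_incEdges fun v _ => f v]
  simp only [deg, Finset.sum_const, nsmul_eq_mul]

theorem sum_sum_incEdges_prod_erase_mul (G : UHG V k) (z : V → ℝ) :
    ∑ v, (∑ e ∈ G.incEdges v, ∏ w ∈ e.erase v, z w) * z v =
      ∑ e ∈ G.edges, (k : ℝ) * ∏ w ∈ e, z w := by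
  simp only [Finset.sum_mul]
  rw [G.sum_sum_incEdges fun v e => (∏ w ∈ e.erase v, z w) * z v]
  refine Finset.sum_congr rfl fun e he => ?_
  rw [Finset.sum_congr rfl fun v hv => Finset.prod_erase_mul e z hv, Finset.sum_const,
    G.uniform e he, nsmul_eq_mul]

theorem eigenEq.mul_sum_pow_eq_Qform {G : UHG V k} (hk0 : 0 < k) {lam : ℝ} {z : V → ℝ}
    (hz : G.eigenEq lam z) : lam * ∑ v, z v ^ k = G.Qform z := by
  calc lam * ∑ v, z v ^ k
      = ∑ v, (lam - G.deg v) * z v ^ (k - 1) * z v + ∑ v, (G.deg v : ℝ) * z v ^ k := by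
        rw [Finset.mul_sum, ← Finset.sum_add_distrib]
        refine Finset.sum_congr rfl fun v _ => ?_
        rw [mul_assoc, pow_sub_one_mul hk0.ne']
        ring
    _ = G.Qform z := by
        rw [Finset.sum_congr rfl fun v _ => by rw [hz v], sum_sum_incEdges_prod_erase_mul,
          sum_deg_mul, Qform, ← Finset.sum_add_distrib]
        exact Finset.sum_congr rfl fun _ _ => add_comm _ _

theorem neg_mul_card_mul_le_Qform (G : UHG V k) (hk : Even k) (hk0 : 0 < k) (z : V → ℝ) :
    -((k : ℝ) * G.edges.card) * ∑ v, z v ^ k ≤ G.Qform z :=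
  calc -((k : ℝ) * G.edges.card) * ∑ v, z v ^ k
      = ∑ _e ∈ G.edges, (0 + (k : ℝ) * -∑ v, z v ^ k) := by
        rw [Finset.sum_const, nsmul_eq_mul]; ring
    _ ≤ G.Qform z :=
      Finset.sum_le_sum fun e he => add_le_add
        (Finset.sum_nonneg fun v _ => hk.pow_nonneg (z v))
        (mul_le_mul_of_nonneg_left (neg_sum_pow_le_prod hk hk0 z (G.uniform e he))
          k.cast_nonneg)

theorem bddBelow_eigenvalues (G : UHG V k) (hk : Even k) (hk0 : 0 < k) :
    BddBelow {lam : ℝ | ∃ x : V → ℝ, x ≠ 0 ∧ G.eigenEq lam x} := by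
  refine ⟨-((k : ℝ) * G.edges.card), ?_⟩
  rintro lam ⟨z, hz0, hz⟩
  refine le_of_mul_le_mul_right ?_ (sum_pow_pos hk hz0)
  rw [hz.mul_sum_pow_eq_Qform hk0]
  exact G.neg_mul_card_mul_le_Qform hk hk0 z

theorem hasStrictFDerivAt_Qform (G : UHG V k) (a : V → ℝ) :
    HasStrictFDerivAt G.Qform (dotProductCLE fun v =>
      k * (G.deg v * a v ^ (k - 1) + ∑ e ∈ G.incEdges v, ∏ w ∈ e.erase v, a w)) a := by
  refine (HasStrictFDerivAt.fun_sum fun e _ =>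
    (HasStrictFDerivAt.fun_sum fun v _ => (hasStrictFDerivAt_apply v a).pow k).add
      ((HasStrictFDerivAt.finsetProd fun v _ => hasStrictFDerivAt_apply v a).const_mul
        (k : ℝ))).congr_fderiv ?_
  ext h
  simp only [_root_.sum_apply, add_apply, smul_apply, ContinuousLinearMap.proj_apply, smul_eq_mul,
    nsmul_eq_mul, dotProductCLE_apply]
  calc _ = ∑ e ∈ G.edges, ∑ v ∈ e, k * (a v ^ (k - 1) + ∏ w ∈ e.erase v, a w) * h v :=
        Finset.sum_congr rfl fun e _ => by
          rw [Finset.mul_sum, ← Finset.sum_add_distrib]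
          exact Finset.sum_congr rfl fun v _ => by ring
    _ = _ := by
        rw [← G.sum_sum_incEdges]
        refine Finset.sum_congr rfl fun v _ => ?_
        rw [deg, ← Finset.sum_mul, ← Finset.mul_sum, Finset.sum_add_distrib, Finset.sum_const,
          nsmul_eq_mul]

theorem continuous_Qform (G : UHG V k) : Continuous G.Qform := by
  unfold Qform; fun_prop

theorem exists_eigenEq_of_isMinOn (G : UHG V k) (hk0 : 0 < k) {z : V → ℝ} (hz : z ≠ 0)
    (hmin : IsMinOn G.Qform {y | ∑ v, y v ^ k = ∑ v, z v ^ k} z) :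
    ∃ lam, G.eigenEq lam z := by
  obtain ⟨a, b, hab, hsum⟩ := IsLocalExtrOn.exists_multipliers_of_hasStrictFDerivAt_1d
    (Or.inl hmin.localize) (hasStrictFDerivAt_sum_pow k z) (G.hasStrictFDerivAt_Qform z)
  rw [← map_smul, ← map_smul, ← map_add, LinearEquiv.map_eq_zero_iff] at hsum
  have hcoord (v : V) : a * (k * z v ^ (k - 1)) + b * (k * (G.deg v * z v ^ (k - 1) +
      ∑ e ∈ G.incEdges v, ∏ w ∈ e.erase v, z w)) = 0 := congrFun hsum v
  have hk : (k : ℝ) ≠ 0 := Nat.cast_ne_zero.mpr hk0.ne'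
  have hb : b ≠ 0 := by
    rintro rfl
    have ha : a ≠ 0 := fun ha => hab (by rw [ha]; rfl)
    exact hz (funext fun v => eq_zero_of_pow_eq_zero (by simpa [ha, hk] using hcoord v))
  refine ⟨-a / b, fun v => ?_⟩
  field_simp
  apply mul_left_cancel₀ hk
  linear_combination -(hcoord v)

theorem exists_eigenEq_mul_sum_pow_le_Qform (G : UHG V k) (hk : Even k) (hk0 : 0 < k)
    {y : V → ℝ} (hy : 0 < ∑ v, y v ^ k) :
    ∃ lam z, z ≠ 0 ∧ G.eigenEq lam z ∧ lam * ∑ v, y v ^ k ≤ G.Qform y := by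
  obtain ⟨z, hzy, hmin⟩ := (isCompact_sum_pow_eq hk hk0 (∑ v, y v ^ k)).exists_isMinOn
    ⟨y, rfl⟩ G.continuous_Qform.continuousOn
  have hzy : ∑ v, z v ^ k = ∑ v, y v ^ k := hzy
  have hz : z ≠ 0 := by
    rintro rfl
    simp only [Pi.zero_apply, zero_pow hk0.ne', Finset.sum_const_zero] at hzy
    linarith
  rw [← hzy] at hmin hy ⊢
  obtain ⟨lam, hlam⟩ := G.exists_eigenEq_of_isMinOn hk0 hz hmin
  refine ⟨lam, z, hz, hlam, ?_⟩
  rw [hlam.mul_sum_pow_eq_Qform hk0]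
  exact hmin hzy.symm

theorem IsFirstEigenvector.Qform_le {G : UHG V k} (hk : Even k) (hk0 : 0 < k) {x : V → ℝ}
    (hx : G.IsFirstEigenvector x) {y : V → ℝ} (hxy : ∑ v, y v ^ k = ∑ v, x v ^ k) :
    G.Qform x ≤ G.Qform y := by
  have hx0 : 0 < ∑ v, x v ^ k := sum_pow_pos hk hx.1
  obtain ⟨lam, z, hz, hlam, hle⟩ := G.exists_eigenEq_mul_sum_pow_le_Qform hk hk0 (hxy ▸ hx0)
  have hlamMin : G.lamMin ≤ lam := csInf_le (G.bddBelow_eigenvalues hk hk0) ⟨z, hz, hlam⟩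
  calc G.Qform x = G.lamMin * ∑ v, x v ^ k := (hx.2.mul_sum_pow_eq_Qform hk0).symm
    _ ≤ lam * ∑ v, x v ^ k := mul_le_mul_of_nonneg_right hlamMin hx0.le
    _ ≤ G.Qform y := hxy ▸ hle

theorem OddBipartite.exists_switching {H : UHG V k} (hk : Even k) (hH : H.OddBipartite)
    (x : V → ℝ) (u : V) :
    ∃ y : V → ℝ, (∀ v, |y v| = |x v|) ∧ y u = x u ∧ (∀ v ∉ H.verts, y v = x v) ∧
      ∀ e ∈ H.edges, ∏ v ∈ e, y v = -∏ v ∈ e, |x v| := by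
  obtain ⟨U, hU⟩ := hH
  set s : V → ℝ := fun v => if v ∈ U then -1 else 1
  have hs (v : V) : |s v| = 1 ∧ s v * s v = 1 := by simp only [s]; split_ifs <;> norm_num
  set c : ℝ := s u * if 0 ≤ x u then 1 else -1
  have hc : |c| = 1 := by simp only [c, abs_mul, (hs u).1]; split_ifs <;> norm_num
  refine ⟨fun v => if v ∈ H.verts then c * s v * |x v| else x v, fun v => ?_, ?_,
    fun v hv => if_neg hv, fun e he => ?_⟩
  · dsimp only
    split_ifs <;> simp [abs_mul, hc, (hs v).1]
  · dsimp only
    split_ifs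
    · calc c * s u * |x u| = s u * s u * ((if 0 ≤ x u then 1 else -1) * |x u|) := by ring
        _ = x u := by
          rw [(hs u).2, one_mul]
          split_ifs with h
          · rw [one_mul, abs_of_nonneg h]
          · rw [abs_of_neg (not_le.mp h)]; ring
    · rfl
  · rw [Finset.prod_congr rfl fun v hv => if_pos (mem_verts_of_mem he hv),
      Finset.prod_mul_distrib, Finset.prod_mul_distrib, Finset.prod_const, H.uniform e he,
      prod_ite_mem_neg_one (hU e he), ← hk.pow_abs, hc, one_pow]
    ring

theorem IsCoalescence.Qform_eq {G G₀ H : UHG V k} {u : V} (h : G.IsCoalescence G₀ H u)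
    (z : V → ℝ) : G.Qform z = G₀.Qform z + H.Qform z := by
  rw [Qform, h.1, Finset.sum_union h.2.1, Qform, Qform]

theorem Qform_congr (G : UHG V k) {x y : V → ℝ}
    (h : ∀ e ∈ G.edges, ∀ v ∈ e, y v = x v) :
    G.Qform y = G.Qform x :=
  Finset.sum_congr rfl fun e he => by
    rw [Finset.sum_congr rfl fun v hv => by rw [h e he v hv],
      Finset.prod_congr rfl (h e he)]

theorem Qform_lt_Qform (G : UHG V k) (hk0 : 0 < k) {x y : V → ℝ}
    (hpow : ∀ v, y v ^ k = x v ^ k)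
    (hle : ∀ e ∈ G.edges, ∏ v ∈ e, y v ≤ ∏ v ∈ e, x v)
    (hlt : ∃ e ∈ G.edges, ∏ v ∈ e, y v < ∏ v ∈ e, x v) : G.Qform y < G.Qform x := by
  have hk : (0 : ℝ) < k := Nat.cast_pos.mpr hk0
  simp only [Qform, hpow]
  obtain ⟨e₀, he₀, hlt₀⟩ := hlt
  exact Finset.sum_lt_sum
    (fun e he => add_le_add le_rfl (mul_le_mul_of_nonneg_left (hle e he) hk.le))
    ⟨e₀, he₀, add_lt_add_of_le_of_lt le_rfl (mul_lt_mul_of_pos_left hlt₀ hk)⟩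

end UHG

theorem stmt7_general {V : Type} [DecidableEq V] [Fintype V] {k : ℕ}
    (hk : Even k) (hk0 : 0 < k) (G G₀ H : UHG V k) (u : V)
    (hcoal : UHG.IsCoalescence G G₀ H u) (hH : H.OddBipartite)
    (x : V → ℝ) (hx : G.IsFirstEigenvector x) :
    ∀ e ∈ H.edges, (∏ v ∈ e, x v) ≤ 0 := by
  intro e₀ he₀
  by_contra! hpos
  obtain ⟨y, habs, hyu, hyx, hprod⟩ := hH.exists_switching hk x u
  have hpow (v : V) : y v ^ k = x v ^ k := by rw [← hk.pow_abs, habs, hk.pow_abs]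
  have hG₀ : G₀.Qform y = G₀.Qform x := G₀.Qform_congr fun e he v hv => by
    by_cases hvH : v ∈ H.verts
    · obtain rfl : v = u := Finset.mem_singleton.mp
        (hcoal.2.2.1 (Finset.mem_inter.mpr ⟨UHG.mem_verts_of_mem he hv, hvH⟩))
      exact hyu
    · exact hyx v hvH
  have hprod_le (e : Finset V) (he : e ∈ H.edges) : ∏ v ∈ e, y v ≤ -|∏ v ∈ e, x v| := by
    rw [hprod e he, Finset.abs_prod]
  have hQH : H.Qform y < H.Qform x := H.Qform_lt_Qform hk0 hpow
    (fun e he => (hprod_le e he).trans (neg_abs_le _))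
    ⟨e₀, he₀, (hprod_le e₀ he₀).trans_lt (by rw [abs_of_pos hpos]; linarith)⟩
  have hmin := hx.Qform_le hk hk0 (Finset.sum_congr rfl fun v _ => hpow v)
  rw [hcoal.Qform_eq, hcoal.Qform_eq] at hmin
  linarith

/-- Let `G = G₀(u) ⋄ H(u)` be a connected `k`-uniform hypergraph (`k` even)
with `H` odd-bipartite, and let `x` be a first eigenvector of `G`. Then
`∏_{v ∈ e} x_v ≤ 0` for every edge `e ∈ E(H)`. -/
theorem stmt7 {V : Type} [DecidableEq V] [Fintype V] {k : ℕ}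
    (hk : Even k) (hk0 : 0 < k) (G G₀ H : UHG V k) (u : V)
    (hcoal : UHG.IsCoalescence G G₀ H u) (hH : H.OddBipartite) (hconn : G.Connected)
    (x : V → ℝ) (hx : G.IsFirstEigenvector x) :
    ∀ e ∈ H.edges, (∏ v ∈ e, x v) ≤ 0 :=
  stmt7_general hk hk0 G G₀ H u hcoal hH x hx
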